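/- arXiv:1402.6302 — 2 statements merged into one kernel-verified Lean document; each statement's English description precedes it below -/
import Mathlib

section
/- For every α ∈ (0,1) with α ≠ 1/2, the series ∑_{j=0}^∞ (Γ(α+j)/(2^j Γ(α) Γ(j+1))) · (α/(j-α)) converges and equals −2^{-α-1}(1-2α) B(1-α,1-α) − 2^{α-1}, where B(a,b) = Γ(a)Γ(b)/Γ(a+b). -/
/-!
Write `c_j = Γ(α+j) / (Γ(α) j!)`, the coefficients of `(1 - t)^(-α) = ∑ c_j t^j`.
For `j ≥ 1`, `c_j x^j / (j - α) = x^α c_j ∫₀ˣ t^(j-α-1) dt`, and all these terms are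
nonnegative, so summing under the integral turns the tail of the series at `x = 1/2` into
`α 2^(-α) ∫₀^(1/2) t^(-α-1) ((1-t)^(-α) - 1) dt`. The function
`H(y) = y^(-α) (1 - (1-y)^(1-α)) / α` vanishes at `0` and satisfies
`H' = t^(-α-1) ((1-t)^(-α) - 1) + ((1 - 2α)/α) t^(-α) (1-t)^(-α)`, while by the symmetry
`t ↦ 1 - t` the last integrand has integral `B(1-α, 1-α) / 2` over `[0, 1/2]`.
-/

open Real MeasureTheory Set Filter Topology

lemma Real.Gamma_add_nat_eq_ascPochhammer_mul {s : ℝ} (hs : ∀ m : ℕ, s ≠ -m) (n : ℕ) :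
    Gamma (s + n) = (ascPochhammer ℝ n).eval s * Gamma s := by
  induction n with
  | zero => simp
  | succ n ih =>
    have hsn : s + n ≠ 0 := fun h => hs n (by linarith)
    rw [Nat.cast_succ, ← add_assoc, Gamma_add_one hsn, ih, ascPochhammer_succ_eval]
    ring

lemma Real.Gamma_add_nat_div_eq_multichoose {s : ℝ} (hs : ∀ m : ℕ, s ≠ -m) (n : ℕ) :
    Gamma (s + n) / (Gamma s * Gamma (n + 1)) = Ring.multichoose s n := by
  have hfact := Ring.factorial_nsmul_multichoose_eq_ascPochhammer s n
  rw [Polynomial.ascPochhammer_smeval_eq_eval, nsmul_eq_mul] at hfact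
  rw [Gamma_add_nat_eq_ascPochhammer_mul hs, Gamma_nat_eq_factorial, ← hfact]
  have := Gamma_ne_zero hs
  field_simp

lemma Real.multichoose_pos {s : ℝ} (hs : 0 < s) (n : ℕ) : 0 < Ring.multichoose s n := by
  rw [← Real.Gamma_add_nat_div_eq_multichoose (fun m h => by linarith [m.cast_nonneg (α := ℝ)])]
  have := Real.Gamma_pos_of_pos hs
  have := Real.Gamma_pos_of_pos (show 0 < s + n by positivity)
  have := Real.Gamma_pos_of_pos (show (0:ℝ) < n + 1 by positivity)
  positivity

lemma Real.hasSum_multichoose_mul_pow (a : ℝ) {x : ℝ} (hx : |x| < 1) :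
    HasSum (fun n => Ring.multichoose a n * x ^ n) ((1 - x) ^ (-a)) := by
  have h := (one_div_one_sub_rpow_hasFPowerSeriesOnBall_zero a).hasSum (y := x)
    (by simpa [enorm_eq_nnnorm, ← NNReal.coe_lt_one] using hx)
  simp only [FormalMultilinearSeries.ofScalars_apply_eq, zero_add, smul_eq_mul,
    ← Ring.multichoose_eq] at h
  rwa [rpow_neg (by linarith [le_abs_self x]), ← one_div]

lemma hasSum_multichoose_succ_mul_rpow {α t : ℝ} (ht0 : 0 < t) (ht1 : t < 1) :
    HasSum (fun j : ℕ => Ring.multichoose α (j + 1) * t ^ ((j : ℝ) - α))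
      (t ^ (-α - 1) * ((1 - t) ^ (-α) - 1)) := by
  have h := (hasSum_nat_add_iff' 1).mpr
    (Real.hasSum_multichoose_mul_pow α (x := t) (by rw [abs_lt]; constructor <;> linarith))
  simp only [Finset.range_one, Finset.sum_singleton, Ring.multichoose_zero_right, pow_zero,
    mul_one] at h
  refine (h.mul_left (t ^ (-α - 1))).congr_fun fun j => ?_
  rw [mul_left_comm, ← rpow_natCast, ← rpow_add ht0]
  push_cast
  ring_nf

lemma summable_multichoose_succ_mul_pow_div {α x : ℝ} (h0 : 0 < α) (h1 : α < 1) (hx0 : 0 ≤ x)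
    (hx1 : x < 1) :
    Summable fun j : ℕ => Ring.multichoose α (j + 1) * x ^ (j + 1) / ((j : ℝ) + 1 - α) := by
  have hbin := ((summable_nat_add_iff 1).mpr (Real.hasSum_multichoose_mul_pow α
    (x := x) (by rw [abs_lt]; constructor <;> linarith)).summable).div_const (1 - α)
  refine hbin.of_nonneg_of_le (fun j => ?_) (fun j => ?_)
  · have := (Real.multichoose_pos h0 (j + 1)).le
    have : 0 < (j : ℝ) + 1 - α := by linarith [j.cast_nonneg (α := ℝ)]
    positivity
  · have := (Real.multichoose_pos h0 (j + 1)).le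
    gcongr
    linarith [j.cast_nonneg (α := ℝ)]

lemma hasSum_multichoose_succ_mul_pow_div {α x : ℝ} (h0 : 0 < α) (h1 : α < 1) (hx0 : 0 < x)
    (hx1 : x < 1) :
    HasSum (fun j : ℕ => Ring.multichoose α (j + 1) * x ^ (j + 1) / ((j : ℝ) + 1 - α))
      (x ^ α * ∫ t in 0..x, t ^ (-α - 1) * ((1 - t) ^ (-α) - 1)) := by
  set F : ℕ → ℝ → ℝ := fun j t => Ring.multichoose α (j + 1) * t ^ ((j : ℝ) - α)
  have hexp (j : ℕ) : -1 < (j : ℝ) - α := by linarith [j.cast_nonneg (α := ℝ)]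
  have hF_int (j : ℕ) : IntervalIntegrable (F j) volume 0 x :=
    (intervalIntegral.intervalIntegrable_rpow' (hexp j)).const_mul _
  have hF_integral (j : ℕ) : ∫ t in 0..x, F j t
      = x ^ (-α) * (Ring.multichoose α (j + 1) * x ^ (j + 1) / ((j : ℝ) + 1 - α)) := by
    rw [intervalIntegral.integral_const_mul, integral_rpow (Or.inl (hexp j)),
      zero_rpow (by linarith [hexp j]), sub_zero, sub_add_eq_add_sub, rpow_sub hx0,
      rpow_neg hx0.le, ← rpow_natCast]
    push_cast
    ring
  have hnorm (j : ℕ) : ∫ t in Ioc 0 x, ‖F j t‖ = ∫ t in 0..x, F j t := by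
    rw [intervalIntegral.integral_of_le hx0.le]
    refine setIntegral_congr_fun measurableSet_Ioc fun t ht => norm_of_nonneg ?_
    exact mul_nonneg (Real.multichoose_pos h0 _).le (rpow_nonneg ht.1.le _)
  have hsum := hasSum_integral_of_summable_integral_norm (fun j => (hF_int j).1)
    (((summable_multichoose_succ_mul_pow_div h0 h1 hx0.le hx1).mul_left (x ^ (-α))).congr
      fun j => by rw [hnorm, hF_integral])
  have hI : ∫ t in 0..x, t ^ (-α - 1) * ((1 - t) ^ (-α) - 1) = ∫ t in Ioc 0 x, ∑' j, F j t := by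
    rw [intervalIntegral.integral_of_le hx0.le]
    exact setIntegral_congr_fun measurableSet_Ioc fun t ht =>
      (hasSum_multichoose_succ_mul_rpow ht.1 (ht.2.trans_lt hx1)).tsum_eq.symm
  rw [hI]
  refine (hsum.mul_left (x ^ α)).congr_fun fun j => ?_
  rw [← intervalIntegral.integral_of_le hx0.le, hF_integral, ← mul_assoc, ← rpow_add hx0,
    add_neg_cancel, rpow_zero, one_mul]

lemma integral_rpow_mul_one_sub_rpow_eq_beta {a b : ℝ} (ha : 0 < a) (hb : 0 < b) :
    ∫ x in 0..1, x ^ (a - 1) * (1 - x) ^ (b - 1) = ProbabilityTheory.beta a b := by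
  have hcomplex : Complex.betaIntegral a b = ↑(∫ x in 0..1, x ^ (a - 1) * (1 - x) ^ (b - 1)) := by
    rw [Complex.betaIntegral, ← intervalIntegral.integral_ofReal]
    refine intervalIntegral.integral_congr fun x hx => ?_
    rw [uIcc_of_le zero_le_one] at hx
    simp only [Complex.ofReal_mul, Complex.ofReal_cpow hx.1,
      Complex.ofReal_cpow (sub_nonneg.2 hx.2), Complex.ofReal_sub, Complex.ofReal_one]
  rw [ProbabilityTheory.beta_eq_betaIntegralReal a b ha hb, hcomplex, Complex.ofReal_re]

lemma intervalIntegrable_rpow_mul_one_sub_rpow {a b c : ℝ} (ha : 0 < a) (hc : c < 1) :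
    IntervalIntegrable (fun x => x ^ (a - 1) * (1 - x) ^ (b - 1)) volume 0 c := by
  refine (intervalIntegral.intervalIntegrable_rpow' (by linarith)).mul_continuousOn ?_
  refine (continuousOn_const.sub continuousOn_id).rpow_const fun x hx => Or.inl ?_
  have : x < 1 := hx.2.trans_lt (max_lt zero_lt_one hc)
  simp only [Pi.sub_apply, id]
  linarith

lemma integral_rpow_mul_one_sub_rpow_half {a : ℝ} (ha : 0 < a) :
    ∫ x in 0..1/2, x ^ (a - 1) * (1 - x) ^ (a - 1) = ProbabilityTheory.beta a a / 2 := by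
  set f : ℝ → ℝ := fun x => x ^ (a - 1) * (1 - x) ^ (a - 1)
  have hsymm : ∫ x in 1/2..1, f x = ∫ x in 0..1/2, f x := by
    simpa [f, mul_comm, eq_comm, show (1 : ℝ) - 2⁻¹ = 2⁻¹ by norm_num]
      using intervalIntegral.integral_comp_sub_left f 1 (a := 0) (b := 1/2)
  have hint : IntervalIntegrable f volume 0 (1/2) :=
    intervalIntegrable_rpow_mul_one_sub_rpow ha (by norm_num)
  have hint' : IntervalIntegrable f volume (1/2) 1 := by
    simpa [f, mul_comm, show (1 : ℝ) - 2⁻¹ = 2⁻¹ by norm_num] using (hint.comp_sub_left 1).symm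
  rw [← integral_rpow_mul_one_sub_rpow_eq_beta ha ha,
    ← intervalIntegral.integral_add_adjacent_intervals hint hint', hsymm]
  ring

lemma hasDerivAt_rpow_neg_mul_one_sub_one_sub_rpow {α t : ℝ} (hα : α ≠ 0) (ht0 : 0 < t)
    (ht1 : t < 1) :
    HasDerivAt (fun y => y ^ (-α) * (1 - (1 - y) ^ (1 - α)) / α)
      (t ^ (-α - 1) * ((1 - t) ^ (-α) - 1) + (1 - 2 * α) / α * (t ^ (-α) * (1 - t) ^ (-α))) t := by
  have h1t : 0 < 1 - t := by linarith
  have hpow : HasDerivAt (fun y => y ^ (-α)) (-α * t ^ (-α - 1)) t :=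
    hasDerivAt_rpow_const (Or.inl ht0.ne')
  have hpow' : HasDerivAt (fun y => (1 - y) ^ (1 - α)) ((1 - α) * (1 - t) ^ (-α) * (-1)) t := by
    have := (hasDerivAt_rpow_const (p := 1 - α) (Or.inl h1t.ne')).comp t
      ((hasDerivAt_id t).const_sub 1)
    rwa [sub_sub_cancel_left] at this
  refine ((hpow.mul (hpow'.const_sub 1)).div_const α).congr_deriv ?_
  have e1 : t ^ (-α) = t ^ (-α - 1) * t := by
    rw [← rpow_add_one ht0.ne', sub_add_cancel]
  have e2 : (1 - t) ^ (1 - α) = (1 - t) ^ (-α) * (1 - t) := by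
    rw [← rpow_add_one h1t.ne', neg_add_eq_sub]
  rw [e1, e2]
  field_simp
  ring

lemma rpow_neg_mul_one_sub_one_sub_rpow_le {α t : ℝ} (hα : 0 ≤ α) (ht0 : 0 < t) (ht1 : t < 1) :
    t ^ (-α) * (1 - (1 - t) ^ (1 - α)) ≤ t ^ (1 - α) := by
  have h1t : 0 < 1 - t := by linarith
  have hle : 1 - t ≤ (1 - t) ^ (1 - α) := by
    simpa using rpow_le_rpow_of_exponent_ge h1t (by linarith) (by linarith : 1 - α ≤ 1)
  calc t ^ (-α) * (1 - (1 - t) ^ (1 - α)) ≤ t ^ (-α) * t := by gcongr; linarith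
    _ = t ^ (1 - α) := by rw [← rpow_add_one ht0.ne', neg_add_eq_sub]

lemma continuousOn_rpow_neg_mul_one_sub_one_sub_rpow {α b : ℝ} (h0 : 0 < α) (h1 : α < 1)
    (hb : b < 1) :
    ContinuousOn (fun y => y ^ (-α) * (1 - (1 - y) ^ (1 - α)) / α) (Icc 0 b) := by
  intro y hy
  rcases hy.1.eq_or_lt with rfl | hy0
  -- Since `0 ^ (-α) = 0`, the formula itself is the continuous extension by `0` at `y = 0`.
  · refine (continuousWithinAt_Ioi_iff_Ici.mp ?_).mono Icc_subset_Ici_self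
    have hupper : Tendsto (fun y : ℝ => y ^ (1 - α) / α) (𝓝[>] 0) (𝓝 0) := by
      have : Tendsto (fun y : ℝ => y ^ (1 - α) / α) (𝓝[>] 0) (𝓝 (0 ^ (1 - α) / α)) :=
        ((continuousAt_rpow_const 0 (1 - α) (Or.inr (by linarith))).tendsto.div_const
          α).mono_left nhdsWithin_le_nhds
      rwa [zero_rpow (by linarith), zero_div] at this
    simp only [ContinuousWithinAt, zero_rpow (neg_ne_zero.2 h0.ne'), zero_mul, zero_div]
    refine tendsto_of_tendsto_of_tendsto_of_le_of_le' tendsto_const_nhds hupper ?_ ?_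
    all_goals filter_upwards [Ioo_mem_nhdsGT zero_lt_one] with t ht
    · have : (1 - t) ^ (1 - α) ≤ 1 :=
        rpow_le_one (by linarith [ht.2]) (by linarith [ht.1]) (by linarith)
      have := rpow_nonneg ht.1.le (-α)
      exact div_nonneg (mul_nonneg this (by linarith)) h0.le
    · exact div_le_div_of_nonneg_right
        (rpow_neg_mul_one_sub_one_sub_rpow_le h0.le ht.1 ht.2) h0.le
  · exact (hasDerivAt_rpow_neg_mul_one_sub_one_sub_rpow h0.ne' hy0
      (hy.2.trans_lt hb)).continuousAt.continuousWithinAt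

lemma one_sub_rpow_neg_sub_one_le {α t : ℝ} (h1 : α ≤ 1) (ht0 : 0 ≤ t) (ht1 : t < 1) :
    (1 - t) ^ (-α) - 1 ≤ t / (1 - t) := by
  have h1t : 0 < 1 - t := by linarith
  have : (1 - t) ^ (-α) ≤ (1 - t) ^ (-1 : ℝ) :=
    rpow_le_rpow_of_exponent_ge h1t (by linarith) (by linarith)
  rw [rpow_neg_one] at this
  calc (1 - t) ^ (-α) - 1 ≤ (1 - t)⁻¹ - 1 := by linarith
    _ = t / (1 - t) := by field_simp; ring

lemma intervalIntegrable_rpow_neg_sub_one_mul_one_sub_rpow_neg_sub_one {α c : ℝ} (h0 : 0 ≤ α)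
    (h1 : α < 1) (hc0 : 0 ≤ c) (hc1 : c < 1) :
    IntervalIntegrable (fun t => t ^ (-α - 1) * ((1 - t) ^ (-α) - 1)) volume 0 c := by
  refine ((intervalIntegral.intervalIntegrable_rpow' (r := -α) (by linarith)).mul_const
    (1 - c)⁻¹).mono_fun' (by fun_prop) ?_
  rw [uIoc_of_le hc0]
  filter_upwards [ae_restrict_mem measurableSet_Ioc] with t ⟨ht0, htc⟩
  have h1t : 0 < 1 - t := by linarith
  have hnonneg : 0 ≤ (1 - t) ^ (-α) - 1 := by
    linarith [one_le_rpow_of_pos_of_le_one_of_nonpos h1t (by linarith) (by linarith : -α ≤ 0)]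
  rw [norm_of_nonneg (mul_nonneg (rpow_nonneg ht0.le _) hnonneg)]
  calc t ^ (-α - 1) * ((1 - t) ^ (-α) - 1) ≤ t ^ (-α - 1) * (t / (1 - t)) := by
        gcongr; exact one_sub_rpow_neg_sub_one_le h1.le ht0.le (by linarith)
    _ = t ^ (-α) * (1 - t)⁻¹ := by
        rw [mul_div_assoc', ← rpow_add_one ht0.ne', sub_add_cancel, div_eq_mul_inv]
    _ ≤ t ^ (-α) * (1 - c)⁻¹ := by gcongr

lemma integral_rpow_neg_sub_one_mul_one_sub_rpow_neg_sub_one_half {α : ℝ} (h0 : 0 < α)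
    (h1 : α < 1) :
    ∫ t in 0..1/2, t ^ (-α - 1) * ((1 - t) ^ (-α) - 1)
      = 2 ^ α * (1 - 2 ^ (α - 1)) / α
        - (1 - 2 * α) / α * (ProbabilityTheory.beta (1 - α) (1 - α) / 2) := by
  have hint₁ := intervalIntegrable_rpow_neg_sub_one_mul_one_sub_rpow_neg_sub_one h0.le h1
    (c := 1/2) (by norm_num) (by norm_num)
  have hint₂ : IntervalIntegrable (fun t => t ^ (-α) * (1 - t) ^ (-α)) volume 0 (1/2) := by
    simpa using intervalIntegrable_rpow_mul_one_sub_rpow (a := 1 - α) (b := 1 - α)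
      (by linarith) (c := 1/2) (by norm_num)
  have hbeta : ∫ t in 0..1/2, t ^ (-α) * (1 - t) ^ (-α)
      = ProbabilityTheory.beta (1 - α) (1 - α) / 2 := by
    simpa using integral_rpow_mul_one_sub_rpow_half (a := 1 - α) (by linarith)
  have hftc := intervalIntegral.integral_eq_sub_of_hasDerivAt_of_le (by norm_num)
    (continuousOn_rpow_neg_mul_one_sub_one_sub_rpow h0 h1 (b := 1/2) (by norm_num))
    (fun t ht => hasDerivAt_rpow_neg_mul_one_sub_one_sub_rpow h0.ne' ht.1 (by linarith [ht.2]))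
    (hint₁.add (hint₂.const_mul _))
  rw [intervalIntegral.integral_add hint₁ (hint₂.const_mul _),
    intervalIntegral.integral_const_mul, hbeta] at hftc
  have h2 : (1/2 : ℝ) ^ (-α) = 2 ^ α := by
    rw [one_div, inv_rpow zero_le_two, rpow_neg zero_le_two, inv_inv]
  have h2' : (1/2 : ℝ) ^ (1 - α) = 2 ^ (α - 1) := by
    rw [one_div, inv_rpow zero_le_two, ← rpow_neg zero_le_two, neg_sub]
  norm_num [zero_rpow (neg_ne_zero.2 h0.ne')] at hftc
  rw [h2, h2'] at hftc
  linarith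

lemma hasSum_multichoose_mul_pow_mul_div_sub {α x : ℝ} (h0 : 0 < α) (h1 : α < 1) (hx0 : 0 < x)
    (hx1 : x < 1) :
    HasSum (fun j : ℕ => Ring.multichoose α j * x ^ j * (α / (j - α)))
      (α * x ^ α * (∫ t in 0..x, t ^ (-α - 1) * ((1 - t) ^ (-α) - 1)) - 1) := by
  have h := HasSum.zero_add (f := fun j : ℕ => Ring.multichoose α j * x ^ j * (α / (j - α)))
    (((hasSum_multichoose_succ_mul_pow_div h0 h1 hx0 hx1).mul_left α).congr_fun
      fun j => by push_cast; ring)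
  rwa [Nat.cast_zero, zero_sub, pow_zero, Ring.multichoose_zero_right, one_mul, one_mul,
    div_neg, div_self h0.ne', ← sub_eq_neg_add, ← mul_assoc] at h

theorem stmt1_general (α : ℝ) (hα : α ∈ Set.Ioo (0:ℝ) 1) :
    HasSum
      (fun j : ℕ =>
        Real.Gamma (α + j) / (2 ^ j * Real.Gamma α * Real.Gamma (j + 1)) * (α / (j - α)))
      (-(2:ℝ) ^ (-α - 1) * (1 - 2 * α) *
          (Real.Gamma (1 - α) * Real.Gamma (1 - α) / Real.Gamma ((1 - α) + (1 - α))) -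
        2 ^ (α - 1)) := by
  obtain ⟨h0, h1⟩ := hα
  have h := hasSum_multichoose_mul_pow_mul_div_sub h0 h1 (x := 1/2) (by norm_num) (by norm_num)
  rw [integral_rpow_neg_sub_one_mul_one_sub_rpow_neg_sub_one_half h0 h1] at h
  convert h using 1
  · funext j
    rw [← Real.Gamma_add_nat_div_eq_multichoose (fun m => by linarith [m.cast_nonneg (α := ℝ)]),
      one_div_pow]
    field_simp
  · have h2 : (1/2 : ℝ) ^ α = (2 ^ α)⁻¹ := by rw [one_div, inv_rpow zero_le_two]
    have h2' : (2 : ℝ) ^ (-α - 1) = (2 ^ α)⁻¹ / 2 := by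
      rw [rpow_sub_one two_ne_zero, rpow_neg zero_le_two]
    have : (2 : ℝ) ^ α ≠ 0 := (rpow_pos_of_pos two_pos α).ne'
    rw [h2, h2', ← ProbabilityTheory.beta]
    field_simp
    ring

/-- For every `α ∈ (0,1)` with `α ≠ 1/2`, the series
`∑_{j=0}^∞ (Γ(α+j)/(2^j Γ(α) Γ(j+1))) · (α/(j-α))` converges and equals
`−2^{-α-1}(1-2α) B(1-α,1-α) − 2^{α-1}`, where `B(a,b) = Γ(a)Γ(b)/Γ(a+b)`. -/
theorem stmt1 (α : ℝ) (hα : α ∈ Set.Ioo (0:ℝ) 1) (hne : α ≠ 1/2) :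
    HasSum
      (fun j : ℕ =>
        Real.Gamma (α + j) / (2 ^ j * Real.Gamma α * Real.Gamma (j + 1)) * (α / (j - α)))
      (-(2:ℝ) ^ (-α - 1) * (1 - 2 * α) *
          (Real.Gamma (1 - α) * Real.Gamma (1 - α) / Real.Gamma ((1 - α) + (1 - α))) -
        2 ^ (α - 1)) :=
  stmt1_general α hα
end

section
/- Let F_n be a distribution function on [0,∞) whose survival function 1−F_n is regularly varying at infinity with index −α for some α ∈ (0,1), and fix c̃ ∈ (0,1). Define V_α(x) = ∫₀^{c̃x} ((1 − u/x)^{-α} − 1) dF_n(u). Then lim_{x→∞} V_α(x)/(1−F_n(x)) = c̃^{-α}(1 − (1−c̃)^{-α}) + α ∫₀^{c̃} u^{-α}(1−u)^{-(α+1)} du. -/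
/-!
With `G = 1 - F_n`, write `(1 - u/x)^{-α} - 1` as the integral of `α (1 - s)^{-(α+1)}` over
`0 < s < u/x` and swap the integrals: `V_α(x) / G(x)` becomes
`∫_0^c̃ α (1 - s)^{-(α+1)} (G(sx) - G(c̃x)) / G(x) ds`. Regular variation gives the pointwise limit
`α (1 - s)^{-(α+1)} (s^{-α} - c̃^{-α})`, and Potter's bound `G(sx) / G(x) ≤ K s^{-β}` for a fixed
`β ∈ (α, 1)` provides an integrable dominating function, so dominated convergence applies.
Integrating the limit with the same primitive `(1 - s)^{-α}` gives the constant.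
-/

open Filter MeasureTheory Real Set Topology

def IsRegularlyVarying (G : ℝ → ℝ) (ρ : ℝ) : Prop :=
  ∀ y > (0:ℝ), Tendsto (fun t => G (t * y) / G t) atTop (𝓝 (y ^ ρ))

lemma IsRegularlyVarying.pos_of_antitone {G : ℝ → ℝ} {ρ : ℝ} (hRV : IsRegularlyVarying G ρ)
    (hG : Antitone G) (hG0 : ∀ t, 0 ≤ G t) (t : ℝ) : 0 < G t := by
  refine (hG0 t).lt_of_ne fun hGt => ?_
  have hzero : (fun u => G (u * 1) / G u) =ᶠ[atTop] fun _ => 0 := by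
    filter_upwards [eventually_ge_atTop t] with u hu
    rw [mul_one, le_antisymm (hGt ▸ hG hu) (hG0 u), div_zero]
  have := tendsto_nhds_unique ((hRV 1 one_pos).congr' hzero) tendsto_const_nhds
  simp at this

section Potter

variable {G : ℝ → ℝ} {t₀ : ℝ}

lemma le_pow_mul_of_half_le {C : ℝ} (hC : 0 ≤ C) (ht₀ : 0 < t₀)
    (hhalf : ∀ u, t₀ ≤ u → G (u / 2) ≤ C * G u) (n : ℕ) {t : ℝ} (ht : t₀ ≤ t / 2 ^ n) :
    G (t / 2 ^ n) ≤ C ^ n * G t := by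
  induction n with
  | zero => simp
  | succ n ih =>
    have htpos : 0 < t := (div_pos_iff_of_pos_right (by positivity)).mp (ht₀.trans_le ht)
    have hn : t₀ ≤ t / 2 ^ n := ht.trans <|
      div_le_div_of_nonneg_left htpos.le (by positivity) (pow_le_pow_right₀ one_le_two n.le_succ)
    calc G (t / 2 ^ (n + 1)) = G (t / 2 ^ n / 2) := by rw [pow_succ, div_div]
    _ ≤ C * G (t / 2 ^ n) := hhalf _ hn
    _ ≤ C * (C ^ n * G t) := mul_le_mul_of_nonneg_left (ih hn) hC
    _ = C ^ (n + 1) * G t := by ring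

/-- Potter's bound above the threshold `t₀`: write `s ∈ (2^{-(n+1)}, 2^{-n}]` and halve `n + 1`
times. -/
lemma Antitone.le_two_rpow_mul_rpow_neg_mul {β : ℝ} (hG : Antitone G) (hG0 : ∀ t, 0 ≤ G t)
    (hβ : 0 ≤ β) (ht₀ : 0 < t₀) (hhalf : ∀ u, t₀ ≤ u → G (u / 2) ≤ 2 ^ β * G u)
    {s t : ℝ} (hs : 0 < s) (hs1 : s ≤ 1) (hst : t₀ ≤ s * t) :
    G (s * t) ≤ 2 ^ β * s ^ (-β) * G t := by
  obtain ⟨n, hn, hn1⟩ := exists_nat_pow_near (one_le_inv_iff₀.mpr ⟨hs, hs1⟩) one_lt_two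
  have ht : 0 < t := pos_of_mul_pos_right (ht₀.trans_le hst) hs.le
  have h2n : (0:ℝ) < 2 ^ n := by positivity
  have hs_lower : 1 ≤ s * 2 ^ (n + 1) := by
    simpa [mul_inv_cancel₀ hs.ne'] using (mul_lt_mul_of_pos_left hn1 hs).le
  have hs_upper : s * 2 ^ n ≤ 1 := by
    simpa [mul_inv_cancel₀ hs.ne'] using mul_le_mul_of_nonneg_left hn hs.le
  have hlower : t / 2 ^ n / 2 ≤ s * t := by
    rw [div_div, ← pow_succ, div_le_iff₀ (by positivity), mul_right_comm]
    exact le_mul_of_one_le_left ht.le hs_lower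
  have hupper : s * t ≤ t / 2 ^ n := by
    rw [le_div_iff₀ h2n, mul_right_comm]
    exact mul_le_of_le_one_left ht.le hs_upper
  have hpow : (2 ^ β) ^ n ≤ s ^ (-β) := by
    rw [Real.rpow_pow_comm zero_le_two, Real.rpow_neg hs.le, ← Real.inv_rpow hs.le]
    exact Real.rpow_le_rpow h2n.le hn hβ
  calc G (s * t) ≤ G (t / 2 ^ n / 2) := hG hlower
  _ ≤ 2 ^ β * G (t / 2 ^ n) := hhalf _ (hst.trans hupper)
  _ ≤ 2 ^ β * ((2 ^ β) ^ n * G t) :=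
      mul_le_mul_of_nonneg_left (le_pow_mul_of_half_le (by positivity) ht₀ hhalf n
        (hst.trans hupper)) (by positivity)
  _ ≤ 2 ^ β * (s ^ (-β) * G t) := by gcongr; exact hG0 t
  _ = 2 ^ β * s ^ (-β) * G t := by ring

/-- Potter's bound, uniform in `s ∈ (0, 1]`: below the threshold, `G (s * t) ≤ G 0` and the
bound above the threshold at `s = t₀ / t` give the same shape. -/
lemma IsRegularlyVarying.exists_potter_bound {α β : ℝ} (hRV : IsRegularlyVarying G (-α))
    (hG : Antitone G) (hpos : ∀ t, 0 < G t) (hβ : 0 ≤ β) (hαβ : α < β) :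
    ∃ K t₀, 0 < t₀ ∧ ∀ t, t₀ ≤ t → ∀ s, 0 < s → s ≤ 1 → G (s * t) ≤ K * s ^ (-β) * G t := by
  have hlt : (1 / 2 : ℝ) ^ (-α) < 2 ^ β := by
    rw [one_div, Real.inv_rpow zero_le_two, ← Real.rpow_neg zero_le_two, neg_neg]
    exact Real.rpow_lt_rpow_of_exponent_lt one_lt_two hαβ
  obtain ⟨T, hT⟩ := eventually_atTop.mp ((hRV _ one_half_pos).eventually_le_const hlt)
  set t₀ := max T 1
  have ht₀ : 0 < t₀ := zero_lt_one.trans_le (le_max_right _ _)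
  have hG0 : ∀ t, 0 ≤ G t := fun t => (hpos t).le
  have hhalf : ∀ u, t₀ ≤ u → G (u / 2) ≤ 2 ^ β * G u := fun u hu => by
    have := hT u ((le_max_left _ _).trans hu)
    rwa [div_le_iff₀ (hpos u), ← div_eq_mul_one_div] at this
  have hratio : 1 ≤ G 0 / G t₀ := (one_le_div (hpos _)).mpr (hG ht₀.le)
  refine ⟨2 ^ β * (G 0 / G t₀), t₀, ht₀, fun t ht s hs hs1 => ?_⟩
  rcases le_or_gt t₀ (s * t) with hst | hst
  · calc G (s * t) ≤ 2 ^ β * s ^ (-β) * G t :=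
          hG.le_two_rpow_mul_rpow_neg_mul hG0 hβ ht₀ hhalf hs hs1 hst
    _ ≤ 2 ^ β * (G 0 / G t₀) * s ^ (-β) * G t := by
        gcongr
        · exact hG0 t
        · exact le_mul_of_one_le_right (by positivity) hratio
  · have htpos : 0 < t := ht₀.trans_le ht
    have hs' : s ≤ t₀ / t := by rw [le_div_iff₀ htpos]; exact hst.le
    have hGt₀ : G t₀ ≤ 2 ^ β * s ^ (-β) * G t :=
      calc G t₀ = G (t₀ / t * t) := by rw [div_mul_cancel₀ _ htpos.ne']
      _ ≤ 2 ^ β * (t₀ / t) ^ (-β) * G t :=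
          hG.le_two_rpow_mul_rpow_neg_mul hG0 hβ ht₀ hhalf (by positivity)
            ((div_le_one htpos).mpr ht) (by rw [div_mul_cancel₀ _ htpos.ne'])
      _ ≤ 2 ^ β * s ^ (-β) * G t := by
          have := Real.rpow_le_rpow_of_nonpos hs hs' (neg_nonpos.mpr hβ)
          gcongr; exact hG0 t
    calc G (s * t) ≤ G 0 := hG (by positivity)
    _ = G 0 / G t₀ * G t₀ := (div_mul_cancel₀ _ (hpos t₀).ne').symm
    _ ≤ G 0 / G t₀ * (2 ^ β * s ^ (-β) * G t) := by gcongr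
    _ = 2 ^ β * (G 0 / G t₀) * s ^ (-β) * G t := by ring

end Potter

lemma setIntegral_Icc_sub_eq_setIntegral_deriv_mul (F : StieltjesFunction ℝ) {h h' : ℝ → ℝ}
    {c x : ℝ} (hx : 0 < x) (hderiv : ∀ s ∈ Icc 0 c, HasDerivAt h (h' s) s)
    (hcont : ContinuousOn h' (Icc 0 c)) :
    ∫ u in Icc 0 (c * x), (h (u / x) - h 0) ∂F.measure =
      ∫ s in Ioo 0 c, h' s * (F (c * x) - F (s * x)) := by
  have : IsFiniteMeasure (F.measure.restrict (Icc 0 (c * x))) :=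
    isFiniteMeasure_restrict.mpr isCompact_Icc.measure_lt_top.ne
  set f : ℝ → ℝ → ℝ := fun u s => {p : ℝ × ℝ | p.2 * x < p.1}.indicator (fun p => h' p.2) (u, s)
  have hh' : IntegrableOn h' (Ioo 0 c) := (hcont.integrableOn_Icc).mono_set Ioo_subset_Icc_self
  have hint : Integrable (Function.uncurry f)
      ((F.measure.restrict (Icc 0 (c * x))).prod (volume.restrict (Ioo 0 c))) :=
    (hh'.comp_snd _).indicator (measurableSet_lt (measurable_snd.mul_const x) measurable_fst)
  have hftc : ∀ u ∈ Icc 0 (c * x), h (u / x) - h 0 = ∫ s in Ioo 0 c, f u s := by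
    intro u hu
    have hux : u / x ≤ c := (div_le_iff₀ hx).mpr hu.2
    have hux0 : 0 ≤ u / x := div_nonneg hu.1 hx.le
    have hsub : uIcc 0 (u / x) ⊆ Icc 0 c := by
      rw [uIcc_of_le hux0]; exact Icc_subset_Icc_right hux
    have hf : (fun s => f u s) = (Iio (u / x)).indicator h' := by
      ext s
      simp only [f, indicator_apply, mem_ofPred_eq, mem_Iio, lt_div_iff₀ hx]
    rw [← intervalIntegral.integral_eq_sub_of_hasDerivAt (fun s hs => hderiv s (hsub hs))
        ((hcont.mono hsub).intervalIntegrable), intervalIntegral.integral_of_le hux0,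
      integral_Ioc_eq_integral_Ioo, hf, setIntegral_indicator measurableSet_Iio, Ioo_inter_Iio,
      min_eq_right hux]
  have hlayer : ∀ s ∈ Ioo 0 c,
      ∫ u in Icc 0 (c * x), f u s ∂F.measure = h' s * (F (c * x) - F (s * x)) := by
    intro s hs
    have hsx : s * x ≤ c * x := mul_le_mul_of_nonneg_right hs.2.le hx.le
    have hf : (fun u => f u s) = (Ioi (s * x)).indicator fun _ => h' s := by
      ext u
      simp only [f, indicator_apply, mem_ofPred_eq, mem_Ioi]
    have hset : Icc 0 (c * x) ∩ Ioi (s * x) = Ioc (s * x) (c * x) :=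
      Set.ext fun u => ⟨fun ⟨⟨_, hu⟩, hsu⟩ => ⟨hsu, hu⟩,
        fun ⟨hsu, hu⟩ => ⟨⟨(mul_pos hs.1 hx).le.trans hsu.le, hu⟩, hsu⟩⟩
    rw [hf, setIntegral_indicator measurableSet_Ioi, hset, setIntegral_const, measureReal_def,
      F.measure_Ioc, ENNReal.toReal_ofReal (sub_nonneg.mpr (F.mono hsx)), smul_eq_mul, mul_comm]
  calc ∫ u in Icc 0 (c * x), (h (u / x) - h 0) ∂F.measure
      = ∫ u in Icc 0 (c * x), (∫ s in Ioo 0 c, f u s) ∂F.measure :=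
        setIntegral_congr_fun measurableSet_Icc hftc
  _ = ∫ s in Ioo 0 c, ∫ u in Icc 0 (c * x), f u s ∂F.measure := integral_integral_swap hint
  _ = ∫ s in Ioo 0 c, h' s * (F (c * x) - F (s * x)) :=
        setIntegral_congr_fun measurableSet_Ioo hlayer

lemma hasDerivAt_one_sub_rpow_neg (α : ℝ) {s : ℝ} (hs : s ≠ 1) :
    HasDerivAt (fun t => (1 - t) ^ (-α)) (α * (1 - s) ^ (-(α + 1))) s := by
  convert ((hasDerivAt_id' s).const_sub 1).rpow_const (p := -α)
    (Or.inl (sub_ne_zero.mpr hs.symm)) using 1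
  rw [show -α - 1 = -(α + 1) by ring]
  ring

lemma continuousOn_one_sub_rpow (r : ℝ) {c : ℝ} (hc : c < 1) :
    ContinuousOn (fun s => (1 - s) ^ r) (Icc 0 c) :=
  (continuousOn_const.sub continuousOn_id).rpow_const fun _ hs =>
    Or.inl (sub_pos.mpr (hs.2.trans_lt hc)).ne'

lemma integral_Ioo_mul_one_sub_rpow (α : ℝ) {c : ℝ} (hc0 : 0 ≤ c) (hc1 : c < 1) :
    ∫ s in Ioo 0 c, α * (1 - s) ^ (-(α + 1)) = (1 - c) ^ (-α) - 1 := by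
  rw [← integral_Ioc_eq_integral_Ioo, ← intervalIntegral.integral_of_le hc0,
    intervalIntegral.integral_eq_sub_of_hasDerivAt
      (fun s hs => hasDerivAt_one_sub_rpow_neg α (by rw [uIcc_of_le hc0] at hs; linarith [hs.2]))
      (uIcc_of_le hc0 ▸ (continuousOn_one_sub_rpow _ hc1).const_mul α).intervalIntegrable]
  simp

lemma IsRegularlyVarying.tendsto_setIntegral_mul_sub_div {G w : ℝ → ℝ} {α c : ℝ}
    (hRV : IsRegularlyVarying G (-α)) (hG : Antitone G) (hpos : ∀ t, 0 < G t) (hα0 : 0 ≤ α)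
    (hα1 : α < 1) (hc0 : 0 < c) (hc1 : c ≤ 1) (hw : ContinuousOn w (Icc 0 c)) :
    Tendsto (fun x => ∫ s in Ioo 0 c, w s * ((G (s * x) - G (c * x)) / G x)) atTop
      (𝓝 (∫ s in Ioo 0 c, w s * (s ^ (-α) - c ^ (-α)))) := by
  obtain ⟨K, t₀, ht₀, hK⟩ := hRV.exists_potter_bound hG hpos (β := (1 + α) / 2) (by positivity)
    (by linarith)
  obtain ⟨M, hM⟩ := isCompact_Icc.exists_bound_of_continuousOn hw
  refine tendsto_integral_filter_of_dominated_convergence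
    (fun s => M * (K * s ^ (-((1 + α) / 2)))) ?_ ?_ ?_ ?_
  · refine Eventually.of_forall fun x => ?_
    refine ((hw.aestronglyMeasurable measurableSet_Icc).mono_measure
      (Measure.restrict_mono Ioo_subset_Icc_self le_rfl)).mul ?_
    exact (((hG.measurable.comp (measurable_id.mul_const x)).sub_const _).div_const _)
      |>.aestronglyMeasurable
  · filter_upwards [eventually_ge_atTop t₀] with x hx
    filter_upwards [ae_restrict_mem measurableSet_Ioo] with s hs
    have hxpos : 0 < x := ht₀.trans_le hx
    have hsc : G (c * x) ≤ G (s * x) := hG (mul_le_mul_of_nonneg_right hs.2.le hxpos.le)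
    have hratio : 0 ≤ (G (s * x) - G (c * x)) / G x := div_nonneg (sub_nonneg.mpr hsc) (hpos x).le
    have hws : ‖w s‖ ≤ M := hM s (Ioo_subset_Icc_self hs)
    rw [norm_mul, Real.norm_of_nonneg hratio]
    refine mul_le_mul hws ?_ hratio ((norm_nonneg _).trans hws)
    rw [div_le_iff₀ (hpos x)]
    linarith [hpos (c * x), hK x hx s hs.1 (hs.2.le.trans hc1)]
  · exact ((intervalIntegral.integrableOn_Ioo_rpow_iff hc0).mpr (by linarith)).const_mul _
      |>.const_mul _
  · filter_upwards [ae_restrict_mem measurableSet_Ioo] with s hs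
    refine ((hRV s hs.1).sub (hRV c hc0)).const_mul (w s) |>.congr fun x => ?_
    rw [sub_div, mul_comm x, mul_comm x]

lemma integral_mul_one_sub_rpow_mul_rpow_sub {α c : ℝ} (hα : α < 1) (hc0 : 0 < c) (hc1 : c < 1) :
    ∫ s in Ioo 0 c, α * (1 - s) ^ (-(α + 1)) * (s ^ (-α) - c ^ (-α)) =
      c ^ (-α) * (1 - (1 - c) ^ (-α)) + α * ∫ u in Ioo 0 c, u ^ (-α) * (1 - u) ^ (-(α + 1)) := by
  have hint₁ : IntegrableOn (fun s => s ^ (-α) * (1 - s) ^ (-(α + 1))) (Ioo 0 c) := by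
    have hrpow : IntegrableOn (fun s => s ^ (-α)) (Icc 0 c) :=
      (integrableOn_Icc_iff_integrableOn_Ioo).mpr
        ((intervalIntegral.integrableOn_Ioo_rpow_iff hc0).mpr (by linarith))
    exact (hrpow.mul_continuousOn (continuousOn_one_sub_rpow _ hc1) isCompact_Icc).mono_set
      Ioo_subset_Icc_self
  have hint₂ : IntegrableOn (fun s => α * (1 - s) ^ (-(α + 1))) (Ioo 0 c) :=
    (((continuousOn_one_sub_rpow _ hc1).const_mul α).integrableOn_Icc).mono_set
      Ioo_subset_Icc_self
  calc ∫ s in Ioo 0 c, α * (1 - s) ^ (-(α + 1)) * (s ^ (-α) - c ^ (-α))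
      = ∫ s in Ioo 0 c, (α * (s ^ (-α) * (1 - s) ^ (-(α + 1))) -
          c ^ (-α) * (α * (1 - s) ^ (-(α + 1)))) :=
        integral_congr_ae (Eventually.of_forall fun s => by ring)
  _ = α * (∫ s in Ioo 0 c, s ^ (-α) * (1 - s) ^ (-(α + 1))) -
        c ^ (-α) * ∫ s in Ioo 0 c, α * (1 - s) ^ (-(α + 1)) := by
        rw [integral_sub (hint₁.const_mul α) (hint₂.const_mul _), integral_const_mul,
          integral_const_mul]
  _ = c ^ (-α) * (1 - (1 - c) ^ (-α)) + α * ∫ u in Ioo 0 c, u ^ (-α) * (1 - u) ^ (-(α + 1)) := by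
        rw [integral_Ioo_mul_one_sub_rpow α hc0.le hc1]
        ring

theorem stmt4_general (α : ℝ) (hα : α ∈ Set.Ioo (0:ℝ) 1) (c : ℝ) (hc : c ∈ Set.Ioo (0:ℝ) 1)
    (Fn : StieltjesFunction ℝ)
    (h1 : Tendsto Fn atTop (nhds 1))
    (hRV : ∀ y > (0:ℝ),
      Tendsto (fun t => (1 - Fn (t * y)) / (1 - Fn t)) atTop (nhds (y ^ (-α)))) :
    Tendsto
      (fun x => (∫ u in Set.Icc 0 (c * x), ((1 - u / x) ^ (-α) - 1) ∂Fn.measure) /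
        (1 - Fn x))
      atTop
      (nhds (c ^ (-α) * (1 - (1 - c) ^ (-α)) +
        α * ∫ u in Set.Ioo (0:ℝ) c, u ^ (-α) * (1 - u) ^ (-(α + 1)))) := by
  obtain ⟨hα0, hα1⟩ := hα
  obtain ⟨hc0, hc1⟩ := hc
  have hRV' : IsRegularlyVarying (fun t => 1 - Fn t) (-α) := hRV
  have hG : Antitone fun t => 1 - Fn t := fun a b hab => sub_le_sub_left (Fn.mono hab) 1
  have hpos : ∀ t, 0 < 1 - Fn t := hRV'.pos_of_antitone hG fun t =>
    sub_nonneg.mpr (Fn.mono.ge_of_tendsto h1 t)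
  have hweight := (continuousOn_one_sub_rpow (-(α + 1)) hc1).const_mul α
  have hlim := hRV'.tendsto_setIntegral_mul_sub_div hG hpos hα0.le hα1 hc0 hc1.le hweight
  rw [integral_mul_one_sub_rpow_mul_rpow_sub hα1 hc0 hc1] at hlim
  refine hlim.congr' ?_
  filter_upwards [eventually_gt_atTop 0] with x hx
  have hlayer := setIntegral_Icc_sub_eq_setIntegral_deriv_mul Fn hx
    (fun s hs => hasDerivAt_one_sub_rpow_neg α (hs.2.trans_lt hc1).ne) hweight
  simp only [sub_zero, one_rpow] at hlayer
  rw [hlayer, ← integral_div]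
  exact integral_congr_ae (Eventually.of_forall fun s => by ring)

/-- Let `F_n` be a distribution function on `[0,∞)` whose survival function `1 − F_n` is
regularly varying at infinity with index `−α` for some `α ∈ (0,1)`, and fix `c̃ ∈ (0,1)`.
With `V_α(x) = ∫₀^{c̃x} ((1 − u/x)^{-α} − 1) dF_n(u)`, one has
`lim_{x→∞} V_α(x)/(1−F_n(x)) = c̃^{-α}(1 − (1−c̃)^{-α}) + α ∫₀^{c̃} u^{-α}(1−u)^{-(α+1)} du`. -/
theorem stmt4 (α : ℝ) (hα : α ∈ Set.Ioo (0:ℝ) 1) (c : ℝ) (hc : c ∈ Set.Ioo (0:ℝ) 1)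
    (Fn : StieltjesFunction ℝ) (h0 : ∀ x < (0:ℝ), Fn x = 0)
    (h1 : Tendsto Fn atTop (nhds 1))
    (hRV : ∀ y > (0:ℝ),
      Tendsto (fun t => (1 - Fn (t * y)) / (1 - Fn t)) atTop (nhds (y ^ (-α)))) :
    Tendsto
      (fun x => (∫ u in Set.Icc 0 (c * x), ((1 - u / x) ^ (-α) - 1) ∂Fn.measure) /
        (1 - Fn x))
      atTop
      (nhds (c ^ (-α) * (1 - (1 - c) ^ (-α)) +
        α * ∫ u in Set.Ioo (0:ℝ) c, u ^ (-α) * (1 - u) ^ (-(α + 1)))) :=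
  stmt4_general α hα c hc Fn h1 hRV
end
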